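/- Let G be a finite simple graph and (i,j) an edge of G. Then the count of diagonal-free 4-cycles seen from i is unchanged by adding a virtual node: #□^i_{G^{+VN}}(i,j) = #□^i_G(i,j). In particular, every 4-cycle in G^{+VN} based at the edge (i,j) that passes through the virtual node v* contains a diagonal, so it is not counted. -/

import Mathlib

open Finset

attribute [local instance] Classical.propDecidable

variable {V : Type*} [Fintype V] [DecidableEq V]

/-- The virtual-node graph `G^{+VN}`: vertex set `V ∪ {v*}` (here `Option V`, with `none`
playing the role of the virtual node `v*`), original adjacency on `V`, and the virtual
node adjacent to every original vertex. -/
def addVN (G : SimpleGraph V) : SimpleGraph (Option V) where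
  Adj u v :=
    match u, v with
    | some a, some b => G.Adj a b
    | some _, none => True
    | none, some _ => True
    | none, none => False
  symm := by
    constructor
    intro u v h
    cases u <;> cases v <;> simp_all
    exact G.symm.symm _ _ h
  loopless := by
    constructor
    intro u h
    cases u <;> simp_all

/-- `#Δ(i,j)`: number of triangles containing the edge `(i,j)`, i.e. common neighbors. -/
noncomputable def triCount (G : SimpleGraph V) (i j : V) : ℕ :=
  (G.neighborFinset i ∩ G.neighborFinset j).card

/-- `#□^i(i,j)`: number of diagonal-free 4-cycles based at the edge `(i,j)`, seen from `i`. -/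
noncomputable def sqCount (G : SimpleGraph V) (i j : V) : ℕ :=
  ((G.neighborFinset i).filter (fun k => k ≠ j ∧ ¬ G.Adj k j ∧
    ∃ w, G.Adj w k ∧ G.Adj w j ∧ w ≠ i ∧ ¬ G.Adj w i)).card

/-- The diagonal-free 4-cycles based at the edge `(i,j)`, as pairs `(k, w)`. -/
noncomputable def fourCycles (G : SimpleGraph V) (i j : V) : Finset (V × V) :=
  Finset.univ.filter (fun p => G.Adj i p.1 ∧ p.1 ≠ j ∧ ¬ G.Adj p.1 j ∧
    G.Adj p.2 p.1 ∧ G.Adj p.2 j ∧ p.2 ≠ i ∧ ¬ G.Adj p.2 i)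

/-- `γ_max(i,j)`: maximum over nodes `k` of the number of diagonal-free 4-cycles based at
`(i,j)` passing through `k`. -/
noncomputable def gammaMax (G : SimpleGraph V) (i j : V) : ℕ :=
  Finset.univ.sup (fun x => ((fourCycles G i j).filter (fun p => p.1 = x ∨ p.2 = x)).card)

/-- The balanced Forman curvature of the edge `(i,j)`. -/
noncomputable def Ric (G : SimpleGraph V) (i j : V) : ℝ :=
  2 / (G.degree i : ℝ) + 2 / (G.degree j : ℝ) - 2
    + (triCount G i j : ℝ) *
        (2 / (max (G.degree i) (G.degree j) : ℝ) + 1 / (min (G.degree i) (G.degree j) : ℝ))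
    + ((gammaMax G i j : ℝ) / (max (G.degree i) (G.degree j) : ℝ)) *
        ((sqCount G i j : ℝ) + (sqCount G j i : ℝ))

/-- The triangle-only balanced Forman curvature `Ric₀` of the edge `(i,j)`. -/
noncomputable def Ric₀ (G : SimpleGraph V) (i j : V) : ℝ :=
  2 / (G.degree i : ℝ) + 2 / (G.degree j : ℝ) - 2
    + (triCount G i j : ℝ) *
        (2 / (max (G.degree i) (G.degree j) : ℝ) + 1 / (min (G.degree i) (G.degree j) : ℝ))

/- The virtual node is adjacent to every original vertex, so a 4-cycle based at `(i, j)` through it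
always has a diagonal: `v*` can be neither the vertex `k` (which must miss `j`) nor the vertex `w`
(which must miss `i`). Hence the diagonal-free 4-cycles of `G^{+VN}` at `(i, j)` are exactly those
of `G`. -/

section addVN

variable {α : Type*} (G : SimpleGraph α)

@[simp]
theorem addVN_adj_some_some (a b : α) : (addVN G).Adj (some a) (some b) ↔ G.Adj a b :=
  Iff.rfl

@[simp]
theorem addVN_adj_none_some (a : α) : (addVN G).Adj none (some a) :=
  trivial

theorem ne_none_of_not_addVN_adj_some {x : Option α} {a : α} (h : ¬ (addVN G).Adj x (some a)) :
    x ≠ none := by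
  rintro rfl
  exact h (addVN_adj_none_some G a)

theorem sqCount_addVN [Fintype α] [DecidableEq α] (i j : α) :
    sqCount (addVN G) (some i) (some j) = sqCount G i j := by
  unfold sqCount
  rw [eq_comm, ← Finset.card_map Function.Embedding.some]
  congr 1
  ext (_ | k) <;> simp [Option.exists]

end addVN

theorem stmt_4_general (G : SimpleGraph V) (i j : V) :
    sqCount (addVN G) (some i) (some j) = sqCount G i j ∧
    ∀ p ∈ fourCycles (addVN G) (some i) (some j), p.1 ≠ none ∧ p.2 ≠ none := by
  refine ⟨sqCount_addVN G i j, fun p hp => ?_⟩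
  simp only [fourCycles, Finset.mem_filter, Finset.mem_univ, true_and] at hp
  obtain ⟨-, -, hk, -, -, -, hw⟩ := hp
  exact ⟨ne_none_of_not_addVN_adj_some G hk, ne_none_of_not_addVN_adj_some G hw⟩

/-- For an edge `(i,j)` of `G`, the count of diagonal-free 4-cycles seen
from `i` is unchanged by adding a virtual node, and no diagonal-free 4-cycle of `G^{+VN}`
based at `(i,j)` passes through the virtual node. -/
theorem stmt_4 (G : SimpleGraph V) (i j : V) (hij : G.Adj i j) :
    sqCount (addVN G) (some i) (some j) = sqCount G i j ∧
    ∀ p ∈ fourCycles (addVN G) (some i) (some j), p.1 ≠ none ∧ p.2 ≠ none :=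
  stmt_4_general G i j
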